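/- arXiv:2301.09020 — 2 statements merged into one kernel-verified Lean document; each statement's English description precedes it below -/
import Mathlib

section
/- (Gill's identity.) For every real t > 0, the product of the failure and censoring product-limit estimators recovers the empirical at-risk fraction: Ŝ_PL(t) · K̂(t) = Y(t+)/n. -/
open Finset
open scoped Classical

noncomputable section

namespace SurvStmt

/-- The finite set of distinct observed times `{X_1, …, X_n}`. -/
def times {n : ℕ} (X : Fin n → ℝ) : Finset ℝ := Finset.image X Finset.univ

/-- `Y(t) = #{i : X_i ≥ t}`, as a real number. -/
def Yat {n : ℕ} (X : Fin n → ℝ) (t : ℝ) : ℝ :=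
  ((Finset.univ.filter (fun i => t ≤ X i)).card : ℝ)

/-- `Y(t+) = #{i : X_i > t}`, as a real number. -/
def Yplus {n : ℕ} (X : Fin n → ℝ) (t : ℝ) : ℝ :=
  ((Finset.univ.filter (fun i => t < X i)).card : ℝ)

/-- `ΔN(t) = #{i : X_i = t, D_i = 1}`, as a real number. -/
def dN {n : ℕ} (X : Fin n → ℝ) (D : Fin n → Bool) (t : ℝ) : ℝ :=
  ((Finset.univ.filter (fun i => X i = t ∧ D i = true)).card : ℝ)

/-- `ΔC(t) = #{i : X_i = t, D_i = 0}`, as a real number. -/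
def dC {n : ℕ} (X : Fin n → ℝ) (D : Fin n → Bool) (t : ℝ) : ℝ :=
  ((Finset.univ.filter (fun i => X i = t ∧ D i = false)).card : ℝ)

/-- `Y†(t) = Y(t) − ΔN(t)`. -/
def Ydag {n : ℕ} (X : Fin n → ℝ) (D : Fin n → Bool) (t : ℝ) : ℝ :=
  Yat X t - dN X D t

/-- `τ = max_i X_i`, the largest observation time (0 if there is no data). -/
def tau {n : ℕ} (X : Fin n → ℝ) : ℝ := ((times X).max).unbotD 0

/-- Censoring product-limit estimator `K̂(t) = ∏_{u ≤ t} (1 − ΔC(u)/Y†(u))`. -/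
def Khat {n : ℕ} (X : Fin n → ℝ) (D : Fin n → Bool) (t : ℝ) : ℝ :=
  ∏ u ∈ (times X).filter (fun u => u ≤ t), (1 - dC X D u / Ydag X D u)

/-- Left limit `K̂(t−) = ∏_{u < t} (1 − ΔC(u)/Y†(u))`. -/
def Kminus {n : ℕ} (X : Fin n → ℝ) (D : Fin n → Bool) (t : ℝ) : ℝ :=
  ∏ u ∈ (times X).filter (fun u => u < t), (1 - dC X D u / Ydag X D u)

/-- Failure product-limit estimator `Ŝ_PL(t) = ∏_{u ≤ t} (1 − ΔN(u)/Y(u))`. -/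
def SPL {n : ℕ} (X : Fin n → ℝ) (D : Fin n → Bool) (t : ℝ) : ℝ :=
  ∏ u ∈ (times X).filter (fun u => u ≤ t), (1 - dN X D u / Yat X u)

/-- Left limit `Ŝ_PL(t−) = ∏_{u < t} (1 − ΔN(u)/Y(u))`. -/
def SPLminus {n : ℕ} (X : Fin n → ℝ) (D : Fin n → Bool) (t : ℝ) : ℝ :=
  ∏ u ∈ (times X).filter (fun u => u < t), (1 - dN X D u / Yat X u)

/-- IPCW estimator `F̂_IPCW(t) = (1/n) ∑_i D_i 1{X_i ≤ t} / K̂(X_i−)`. -/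
def FIPCW {n : ℕ} (X : Fin n → ℝ) (D : Fin n → Bool) (t : ℝ) : ℝ :=
  (1 / (n : ℝ)) * ∑ i : Fin n,
    (if D i = true then (1 : ℝ) else 0) * (if X i ≤ t then (1 : ℝ) else 0) / Kminus X D (X i)

/-- IPCW survival estimator `S̃_IPCW(t) = (1/n) ∑_i D_i 1{X_i > t} / K̂(X_i−)`. -/
def SIPCW {n : ℕ} (X : Fin n → ℝ) (D : Fin n → Bool) (t : ℝ) : ℝ :=
  (1 / (n : ℝ)) * ∑ i : Fin n,
    (if D i = true then (1 : ℝ) else 0) * (if t < X i then (1 : ℝ) else 0) / Kminus X D (X i)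

/-- RTTR jump weight `J(v) = 1/(n · K̂(v−))`. -/
def Jw {n : ℕ} (X : Fin n → ℝ) (D : Fin n → Bool) (v : ℝ) : ℝ :=
  1 / ((n : ℝ) * Kminus X D v)

/-- Redistribute-to-the-right estimator
`Ŝ_RTTR(t) = 1 − ∑_{v ≤ t} [J(v) ΔN(v) 1{v < τ} + J(τ) Y(τ) 1{v = τ}]`. -/
def SRTTR {n : ℕ} (X : Fin n → ℝ) (D : Fin n → Bool) (t : ℝ) : ℝ :=
  1 - ∑ v ∈ (times X).filter (fun v => v ≤ t),
      (Jw X D v * dN X D v * (if v < tau X then (1 : ℝ) else 0)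
        + Jw X D (tau X) * Yat X (tau X) * (if v = tau X then (1 : ℝ) else 0))

/-!
At each observed time `u` the two product-limit factors multiply to the factor of the product-limit
estimator of *all* events, `(1 - ΔN/Y)(1 - ΔC/Y†) = Y(u+)/Y(u)`, because `Y = Y(u+) + ΔN + ΔC`.
That product telescopes, since `Y(u+)` is `Y` at the next observed time and `Y` at the first
one is `n`.
-/

lemma one_sub_div_mul_one_sub_div {a b c : ℝ} (ha : 0 ≤ a) (hc : 0 ≤ c) (hy : a + b + c ≠ 0) :
    (1 - b / (a + b + c)) * (1 - c / (a + c)) = a / (a + b + c) := by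
  rcases (add_nonneg ha hc).eq_or_lt with hac | hac
  · -- `Y† = 0` forces `ΔC = 0`, and the censoring factor is `1 - 0 / 0 = 1`
    obtain ⟨rfl, rfl⟩ : a = 0 ∧ c = 0 := ⟨by linarith, by linarith⟩
    have hb : b ≠ 0 := by simpa using hy
    simp [hb]
  · field_simp
    ring

section Counts

variable {n : ℕ} (X : Fin n → ℝ) (D : Fin n → Bool)

lemma mem_times {u : ℝ} : u ∈ times X ↔ ∃ i, X i = u := by
  simp [times]

lemma Yat_pos_of_mem_times {u : ℝ} (hu : u ∈ times X) : 0 < Yat X u := by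
  obtain ⟨i, rfl⟩ := (mem_times X).1 hu
  unfold Yat
  exact_mod_cast Finset.card_pos.2 ⟨i, by simp⟩

lemma Yat_eq_Yplus_add_dN_add_dC (t : ℝ) : Yat X t = Yplus X t + dN X D t + dC X D t := by
  simp only [Yat, Yplus, dN, dC, Finset.card_filter]
  push_cast
  rw [← Finset.sum_add_distrib, ← Finset.sum_add_distrib]
  refine Finset.sum_congr rfl fun i _ => ?_
  rcases lt_trichotomy t (X i) with h | rfl | h
  · simp [h, h.le, h.ne']
  · cases D i <;> simp
  · simp [h.ne, not_le.2 h, not_lt.2 h.le]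

lemma Yat_eq_Yplus_of_notMem_times {t : ℝ} (ht : t ∉ times X) : Yat X t = Yplus X t := by
  unfold Yat Yplus
  congr 2
  refine Finset.filter_congr fun i _ => ⟨fun h => h.lt_of_ne ?_, le_of_lt⟩
  rintro rfl
  exact ht ((mem_times X).2 ⟨i, rfl⟩)

lemma Yat_eq_of_forall_le {t : ℝ} (ht : ∀ i, t ≤ X i) : Yat X t = n := by
  simp [Yat, ht]

lemma Yat_eq_Yplus_of_forall_lt_imp_le {a t : ℝ} (hat : a < t)
    (hgap : ∀ i, X i < t → X i ≤ a) : Yat X t = Yplus X a := by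
  unfold Yat Yplus
  congr 2
  refine Finset.filter_congr fun i _ => ⟨hat.trans_le, fun h => ?_⟩
  by_contra hlt
  exact (hgap i (not_le.1 hlt)).not_gt h

lemma one_sub_dN_div_mul_one_sub_dC_div {u : ℝ} (hu : u ∈ times X) :
    (1 - dN X D u / Yat X u) * (1 - dC X D u / Ydag X D u) = Yplus X u / Yat X u := by
  have hsplit := Yat_eq_Yplus_add_dN_add_dC X D u
  have hYdag : Ydag X D u = Yplus X u + dC X D u := by rw [Ydag, hsplit]; ring
  rw [hYdag, hsplit]
  exact one_sub_div_mul_one_sub_div (Nat.cast_nonneg _) (Nat.cast_nonneg _)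
    (hsplit ▸ (Yat_pos_of_mem_times X hu).ne')

lemma natCast_mul_prod_Yplus_div_Yat_lt (t : ℝ) :
    n * ∏ u ∈ (times X).filter (· < t), Yplus X u / Yat X u = Yat X t := by
  suffices ∀ s, ∀ t, (times X).filter (· < t) = s →
      n * ∏ u ∈ s, Yplus X u / Yat X u = Yat X t from this _ t rfl
  intro s
  induction s using Finset.induction_on_max with
  | empty =>
    intro t hs
    rw [Finset.prod_empty, mul_one, Yat_eq_of_forall_le]
    refine fun i => not_lt.1 fun hi => ?_
    have : X i ∈ (times X).filter (· < t) := Finset.mem_filter.2 ⟨(mem_times X).2 ⟨i, rfl⟩, hi⟩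
    simp [hs] at this
  | insert a s hlt ih =>
    intro t hs
    have hmem : ∀ {x}, x ∈ insert a s ↔ x ∈ times X ∧ x < t := by
      simp [← hs]
    obtain ⟨ha, hat⟩ := hmem.1 (Finset.mem_insert_self a s)
    have hs' : (times X).filter (· < a) = s := by
      ext x
      simp only [Finset.mem_filter]
      refine ⟨fun ⟨hx, hxa⟩ => ?_, fun hx => ⟨(hmem.1 (Finset.mem_insert_of_mem hx)).1, hlt x hx⟩⟩
      exact (Finset.mem_insert.1 (hmem.2 ⟨hx, hxa.trans hat⟩)).resolve_left hxa.ne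
    have hgap : ∀ i, X i < t → X i ≤ a := fun i hi =>
      (Finset.mem_insert.1 (hmem.2 ⟨(mem_times X).2 ⟨i, rfl⟩, hi⟩)).elim le_of_eq
        fun h => (hlt _ h).le
    rw [Finset.prod_insert fun h => (hlt a h).false, mul_left_comm, ih a hs',
      div_mul_cancel₀ _ (Yat_pos_of_mem_times X ha).ne',
      Yat_eq_Yplus_of_forall_lt_imp_le X hat hgap]

lemma natCast_mul_prod_Yplus_div_Yat_le (t : ℝ) :
    n * ∏ u ∈ (times X).filter (· ≤ t), Yplus X u / Yat X u = Yplus X t := by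
  by_cases ht : t ∈ times X
  · have hfilter : (times X).filter (· ≤ t) = insert t ((times X).filter (· < t)) := by
      ext u
      simp only [Finset.mem_filter, Finset.mem_insert, le_iff_lt_or_eq]
      constructor
      · rintro ⟨hu, hlt | rfl⟩
        exacts [Or.inr ⟨hu, hlt⟩, Or.inl rfl]
      · rintro (rfl | ⟨hu, hlt⟩)
        exacts [⟨ht, Or.inr rfl⟩, ⟨hu, Or.inl hlt⟩]
    rw [hfilter, Finset.prod_insert (by simp), mul_left_comm,
      natCast_mul_prod_Yplus_div_Yat_lt, div_mul_cancel₀ _ (Yat_pos_of_mem_times X ht).ne']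
  · have hfilter : (times X).filter (· ≤ t) = (times X).filter (· < t) :=
      Finset.filter_congr fun u hu => ⟨fun h => h.lt_of_ne (ne_of_mem_of_not_mem hu ht), le_of_lt⟩
    rw [hfilter, natCast_mul_prod_Yplus_div_Yat_lt, Yat_eq_Yplus_of_notMem_times X ht]

end Counts

theorem stmt4_general (n : ℕ) (hn : 0 < n) (X : Fin n → ℝ) (D : Fin n → Bool) :
    ∀ t : ℝ, 0 < t →
      SPL X D t * Khat X D t = Yplus X t / (n : ℝ) := by
  intro t _
  have hprod : SPL X D t * Khat X D t
      = ∏ u ∈ (times X).filter (· ≤ t), Yplus X u / Yat X u := by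
    rw [SPL, Khat, ← Finset.prod_mul_distrib]
    exact Finset.prod_congr rfl fun u hu =>
      one_sub_dN_div_mul_one_sub_dC_div X D (Finset.mem_filter.1 hu).1
  rw [hprod, eq_div_iff (by positivity), mul_comm]
  exact natCast_mul_prod_Yplus_div_Yat_le X t

/-- Gill's identity: for every `t > 0`, `Ŝ_PL(t) · K̂(t) = Y(t+)/n`. -/
theorem stmt4 (n : ℕ) (hn : 0 < n) (X : Fin n → ℝ) (D : Fin n → Bool)
    (hX : ∀ i, 0 < X i) :
    ∀ t : ℝ, 0 < t →
      SPL X D t * Khat X D t = Yplus X t / (n : ℝ) :=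
  stmt4_general n hn X D

end SurvStmt
end
end

section
/- (Conservation of mass in the redistribute-to-the-right algorithm.) With J(v) := 1/(n · K̂(v−)) for each observed time v ∈ {X_1,…,X_n}, the total redistributed mass equals one: ∑_{v observed, v < τ} J(v) · ΔN(v) + Y(τ) · J(τ) = 1. -/
open Finset
open scoped Classical

noncomputable section

/-!
Write `G(t) = Y(t) · J(t)` for the mass still to be redistributed at `t`. Before the first
observed time `G = n / n = 1`. If `v < t` and no observation falls in `(v, t)`, then
`Y(t) = Y(v+)` and `K̂(t−) = K̂(v−) · Y(v+) / Y†(v)`, so `G(t) = Y†(v) · J(v) = G(v) − J(v) ΔN(v)`: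
passing an observed time `v` moves exactly the mass `J(v) ΔN(v)` out of `G`, and summing over the
observed times below `τ` telescopes. Every factor `Y(u+) / Y†(u)` with `u < τ` is positive, so no
division by zero occurs along the way.
-/

theorem Finset.filter_lt_eq_insert_filter_lt {α : Type*} [LinearOrder α] {s : Finset α}
    {v t : α} (hv : v ∈ s) (hvt : v < t) (hmax : ∀ u ∈ s, u < t → u ≤ v) :
    s.filter (· < t) = insert v (s.filter (· < v)) := by
  ext u
  simp only [mem_filter, mem_insert]
  constructor
  · rintro ⟨hu, hut⟩
    exact (hmax u hu hut).eq_or_lt.imp id fun huv => ⟨hu, huv⟩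
  · rintro (rfl | ⟨hu, huv⟩)
    exacts [⟨hv, hvt⟩, ⟨hu, huv.trans hvt⟩]

namespace SurvStmt

variable {n : ℕ} (X : Fin n → ℝ) (D : Fin n → Bool)

theorem mem_times_s16 (i : Fin n) : X i ∈ times X :=
  mem_image_of_mem X (mem_univ i)

theorem Yat_eq_dN_add_dC_add_Yplus (v : ℝ) : Yat X v = dN X D v + dC X D v + Yplus X v := by
  simp only [Yat, dN, dC, Yplus, card_filter, Nat.cast_sum, ← sum_add_distrib]
  refine sum_congr rfl fun i _ => ?_
  rcases lt_trichotomy (X i) v with h | rfl | h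
  · simp [h.ne, not_le.mpr h, h.not_gt]
  · cases D i <;> simp
  · simp [h.ne', h.le, h]

theorem Ydag_eq_dC_add_Yplus (v : ℝ) : Ydag X D v = dC X D v + Yplus X v := by
  rw [Ydag, Yat_eq_dN_add_dC_add_Yplus X D]
  ring

variable {X}

theorem Yplus_pos {v : ℝ} {j : Fin n} (h : v < X j) : 0 < Yplus X v := by
  unfold Yplus
  exact_mod_cast card_pos.mpr ⟨j, by simpa using h⟩

theorem Ydag_pos {v : ℝ} {j : Fin n} (h : v < X j) : 0 < Ydag X D v := by
  rw [Ydag_eq_dC_add_Yplus]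
  exact add_pos_of_nonneg_of_pos (Nat.cast_nonneg _) (Yplus_pos h)

theorem one_sub_dC_div_Ydag {v : ℝ} {j : Fin n} (h : v < X j) :
    1 - dC X D v / Ydag X D v = Yplus X v / Ydag X D v := by
  rw [one_sub_div (Ydag_pos D h).ne', Ydag_eq_dC_add_Yplus, add_sub_cancel_left]

theorem Kminus_pos {v : ℝ} {j : Fin n} (h : v ≤ X j) : 0 < Kminus X D v := by
  refine prod_pos fun u hu => ?_
  have hu : u < X j := (mem_filter.mp hu).2.trans_le h
  rw [one_sub_dC_div_Ydag D hu]
  exact div_pos (Yplus_pos hu) (Ydag_pos D hu)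

variable {v t : ℝ}

theorem Yat_eq_Yplus_of_consecutive (hvt : v < t) (hmax : ∀ u ∈ times X, u < t → u ≤ v) :
    Yat X t = Yplus X v := by
  unfold Yat Yplus
  congr 2
  ext i
  simp only [mem_filter, mem_univ, true_and]
  exact ⟨hvt.trans_le, fun h => not_lt.mp fun hit => h.not_ge (hmax _ (mem_times_s16 X i) hit)⟩

theorem Kminus_eq_of_consecutive (hv : v ∈ times X) (hvt : v < t)
    (hmax : ∀ u ∈ times X, u < t → u ≤ v) :
    Kminus X D t = (1 - dC X D v / Ydag X D v) * Kminus X D v := by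
  rw [Kminus, filter_lt_eq_insert_filter_lt hv hvt hmax,
    prod_insert (by simp), Kminus]

theorem Yat_mul_Jw_of_consecutive (hv : v ∈ times X) (hvt : v < t)
    (hmax : ∀ u ∈ times X, u < t → u ≤ v) {j : Fin n} (ht : t ≤ X j) :
    Yat X t * Jw X D t = Yat X v * Jw X D v - Jw X D v * dN X D v := by
  have hvj : v < X j := hvt.trans_le ht
  have hn : (n : ℝ) ≠ 0 := Nat.cast_ne_zero.mpr j.pos.ne'
  have hY := (Yplus_pos hvj).ne'
  have hYdag := (Ydag_pos D hvj).ne'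
  have hK := (Kminus_pos D hvj.le).ne'
  have hdN : dN X D v = Yat X v - Ydag X D v := by rw [Ydag]; ring
  rw [Yat_eq_Yplus_of_consecutive hvt hmax, Jw, Jw, Kminus_eq_of_consecutive D hv hvt hmax,
    one_sub_dC_div_Ydag D hvj, hdN]
  field_simp
  ring

theorem sum_Jw_mul_dN_add_Yat_mul_Jw {j : Fin n} (ht : t ≤ X j) :
    ∑ v ∈ (times X).filter (· < t), Jw X D v * dN X D v + Yat X t * Jw X D t = 1 := by
  induction hk : ((times X).filter (· < t)).card generalizing t with
  | zero =>
    have hempty := card_eq_zero.mp hk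
    have hall : ∀ i, t ≤ X i := fun i => not_lt.mp fun hit =>
      filter_eq_empty_iff.mp hempty (mem_times_s16 X i) hit
    have hn : (n : ℝ) ≠ 0 := Nat.cast_ne_zero.mpr j.pos.ne'
    rw [hempty, sum_empty, Jw, Kminus, hempty, prod_empty, Yat,
      filter_true_of_mem fun i _ => hall i, card_univ, Fintype.card_fin]
    field_simp
    ring
  | succ k ih =>
    have hne : ((times X).filter (· < t)).Nonempty := card_pos.mp (by rw [hk]; omega)
    obtain ⟨v, hv_mem, hv_max⟩ := exists_max_image _ id hne
    obtain ⟨hv, hvt⟩ := mem_filter.mp hv_mem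
    have hmax : ∀ u ∈ times X, u < t → u ≤ v := fun u hu hut =>
      hv_max u (mem_filter.mpr ⟨hu, hut⟩)
    have hsplit := filter_lt_eq_insert_filter_lt hv hvt hmax
    have hv_notMem : v ∉ (times X).filter (· < v) := by simp
    rw [hsplit, card_insert_of_notMem hv_notMem, Nat.succ_inj] at hk
    have hprev := ih (hvt.le.trans ht) hk
    rw [hsplit, sum_insert hv_notMem, Yat_mul_Jw_of_consecutive D hv hvt hmax ht]
    linarith

theorem tau_mem_times (h : (times X).Nonempty) : tau X ∈ times X := by
  rw [tau, ← coe_max' h]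
  exact max'_mem _ h

theorem stmt16_general (n : ℕ) (hn : 0 < n) (X : Fin n → ℝ) (D : Fin n → Bool) :
    ∑ v ∈ (times X).filter (fun v => v < tau X), Jw X D v * dN X D v
      + Yat X (tau X) * Jw X D (tau X) = 1 := by
  have hne : (times X).Nonempty := ⟨_, mem_times_s16 X ⟨0, hn⟩⟩
  obtain ⟨j, -, hj⟩ := mem_image.mp (tau_mem_times hne)
  exact sum_Jw_mul_dN_add_Yat_mul_Jw D hj.ge

/-- conservation of mass in RTTR: with `J(v) = 1/(n K̂(v−))`,
`∑_{v observed, v < τ} J(v) ΔN(v) + Y(τ) J(τ) = 1`. -/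
theorem stmt16 (n : ℕ) (hn : 0 < n) (X : Fin n → ℝ) (D : Fin n → Bool)
    (hX : ∀ i, 0 < X i) :
    ∑ v ∈ (times X).filter (fun v => v < tau X), Jw X D v * dN X D v
      + Yat X (tau X) * Jw X D (tau X) = 1 :=
  stmt16_general n hn X D

end SurvStmt
end
end
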